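/- arXiv:2504.03114 — 2 statements merged into one kernel-verified Lean document; each statement's English description precedes it below -/
import Mathlib

section
/- Let v : ℝⁿ → ℝⁿ be a smooth vector field, and for a smooth function W : ℝⁿ → ℝ define the weighted divergence div^W(v) = div(v) − ⟨∇W, v⟩. Then the weighted Bochner-type identity holds pointwise: tr((∇v)²) + ⟨∇²W · v, v⟩ = div^W(∇_v v) − ⟨∇(div^W v), v⟩, where ∇_v v denotes the covariant derivative (Dv)v. -/
/-- Partial derivative in the `i`-th coordinate direction. -/
noncomputable def pderiv' {n : ℕ} (f : (Fin n → ℝ) → ℝ) (i : Fin n) (x : Fin n → ℝ) : ℝ :=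
  fderiv ℝ f x (Pi.single i 1)

/-- Weighted divergence `div^W(v) = div(v) − ⟨∇W, v⟩`. -/
noncomputable def divW {n : ℕ} (W : (Fin n → ℝ) → ℝ) (v : (Fin n → ℝ) → Fin n → ℝ)
    (x : Fin n → ℝ) : ℝ :=
  (∑ i, pderiv' (fun y => v y i) i x) - ∑ i, pderiv' W i x * v x i

lemma pd_contDiff {n : ℕ} {f : (Fin n → ℝ) → ℝ} (hf : ContDiff ℝ (⊤ : ℕ∞) f) (i : Fin n) :
    ContDiff ℝ (⊤ : ℕ∞) (fun y => pderiv' f i y) :=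
  (hf.fderiv_right (by simp)).clm_apply contDiff_const

lemma pderiv'_fsum {n : ℕ} {ι : Type*} (s : Finset ι) (F : ι → (Fin n → ℝ) → ℝ) (i : Fin n)
    (x : Fin n → ℝ) (hF : ∀ k ∈ s, DifferentiableAt ℝ (F k) x) :
    pderiv' (fun y => ∑ k ∈ s, F k y) i x = ∑ k ∈ s, pderiv' (F k) i x := by
  simp only [pderiv']
  rw [fderiv_fun_sum hF]
  simp

lemma pderiv'_mul {n : ℕ} {f g : (Fin n → ℝ) → ℝ} {x : Fin n → ℝ} (i : Fin n)
    (hf : DifferentiableAt ℝ f x) (hg : DifferentiableAt ℝ g x) :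
    pderiv' (fun y => f y * g y) i x = pderiv' f i x * g x + f x * pderiv' g i x := by
  simp only [pderiv']
  rw [fderiv_fun_mul hf hg]
  simp
  ring

lemma pderiv'_sub {n : ℕ} {f g : (Fin n → ℝ) → ℝ} {x : Fin n → ℝ} (i : Fin n)
    (hf : DifferentiableAt ℝ f x) (hg : DifferentiableAt ℝ g x) :
    pderiv' (fun y => f y - g y) i x = pderiv' f i x - pderiv' g i x := by
  simp only [pderiv']
  rw [fderiv_fun_sub hf hg]
  simp

lemma pderiv'_comm {n : ℕ} {f : (Fin n → ℝ) → ℝ} (hf : ContDiff ℝ (⊤ : ℕ∞) f) (i j : Fin n)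
    (x : Fin n → ℝ) :
    pderiv' (fun y => pderiv' f i y) j x = pderiv' (fun y => pderiv' f j y) i x := by
  have hd : DifferentiableAt ℝ (fderiv ℝ f) x :=
    ((hf.fderiv_right (m := (⊤ : ℕ∞)) (by simp)).differentiable (by simp)).differentiableAt
  have key : ∀ u w : Fin n → ℝ, fderiv ℝ (fun y => fderiv ℝ f y u) x w
      = fderiv ℝ (fderiv ℝ f) x w u := by
    intro u w
    rw [fderiv_clm_apply hd (differentiableAt_const u)]
    simp
  have hsym := ((hf.contDiffAt (x := x)).isSymmSndFDerivAt (by rw [minSmoothness_of_isRCLikeNormedField]; exact WithTop.coe_le_coe.mpr (le_top : (2 : ℕ∞) ≤ ⊤))).eq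
  simp only [pderiv', key]
  exact hsym _ _

lemma alg_id {n : ℕ} (A : Fin n → Fin n → ℝ) (C : Fin n → Fin n → Fin n → ℝ)
    (W2 : Fin n → Fin n → ℝ) (Wd V : Fin n → ℝ)
    (hC : ∀ k i j, C k i j = C k j i) :
    (∑ i, ∑ j, A i j * A j i) + (∑ i, ∑ j, W2 i j * V i * V j) =
    ((∑ i, ∑ j, (A j i * A i j + V j * C i j i)) - ∑ i, Wd i * ∑ j, V j * A i j)
      - ∑ i, ((∑ j, C j j i) - ∑ j, (W2 j i * V j + Wd j * A j i)) * V i := by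
  have h1 : ∑ i, ∑ j, V j * C i j i = ∑ i, ∑ j, C j j i * V i := by
    rw [Finset.sum_comm]
    exact Finset.sum_congr rfl fun i _ => Finset.sum_congr rfl fun j _ => by rw [hC]; ring
  have h2 : ∑ i, ∑ j, Wd i * (V j * A i j) = ∑ i, ∑ j, Wd j * A j i * V i := by
    rw [Finset.sum_comm]
    exact Finset.sum_congr rfl fun i _ => Finset.sum_congr rfl fun j _ => by ring
  have h3 : ∑ i, ∑ j, W2 i j * V i * V j = ∑ i, ∑ j, W2 j i * V j * V i := Finset.sum_comm
  have h4 : ∑ i, ∑ j, A i j * A j i = ∑ i, ∑ j, A j i * A i j :=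
    Finset.sum_congr rfl fun i _ => Finset.sum_congr rfl fun j _ => by ring
  simp only [Finset.sum_add_distrib, Finset.sum_sub_distrib, Finset.mul_sum, Finset.sum_mul,
    sub_mul, add_mul]
  linarith [h1, h2, h3, h4]

theorem stmt_11 {n : ℕ} (v : (Fin n → ℝ) → Fin n → ℝ) (W : (Fin n → ℝ) → ℝ)
    (hv : ContDiff ℝ (⊤ : ℕ∞) v) (hW : ContDiff ℝ (⊤ : ℕ∞) W) (x : Fin n → ℝ) :
    (∑ i, ∑ j, pderiv' (fun y => v y i) j x * pderiv' (fun y => v y j) i x) +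
      (∑ i, ∑ j, pderiv' (fun y => pderiv' W i y) j x * v x i * v x j) =
    divW W (fun y k => ∑ j, v y j * pderiv' (fun z => v z k) j y) x -
      ∑ i, pderiv' (divW W v) i x * v x i := by
  have hvk : ∀ k, ContDiff ℝ (⊤ : ℕ∞) fun y => v y k := fun k => contDiff_pi.mp hv k
  have hdvk : ∀ k j, ContDiff ℝ (⊤ : ℕ∞) fun y => pderiv' (fun z => v z k) j y :=
    fun k j => pd_contDiff (hvk k) j
  have hdW : ∀ j, ContDiff ℝ (⊤ : ℕ∞) fun y => pderiv' W j y := fun j => pd_contDiff hW j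
  -- expansion of the divergence of u
  have e1 : ∀ i, pderiv' (fun y => ∑ j, v y j * pderiv' (fun z => v z i) j y) i x
      = ∑ j, (pderiv' (fun y => v y j) i x * pderiv' (fun z => v z i) j x
          + v x j * pderiv' (fun y => pderiv' (fun z => v z i) j y) i x) := by
    intro i
    rw [pderiv'_fsum _ (fun j y => v y j * pderiv' (fun z => v z i) j y) i x
      (fun j _ => (((hvk j).differentiable (by simp)).differentiableAt).mul
        (((hdvk i j).differentiable (by simp)).differentiableAt))]
    exact Finset.sum_congr rfl fun j _ =>
      pderiv'_mul i (((hvk j).differentiable (by simp)).differentiableAt)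
        (((hdvk i j).differentiable (by simp)).differentiableAt)
  -- expansion of the gradient of divW v
  have e2 : ∀ i, pderiv' (divW W v) i x
      = (∑ j, pderiv' (fun y => pderiv' (fun z => v z j) j y) i x)
        - ∑ j, (pderiv' (fun y => pderiv' W j y) i x * v x j
            + pderiv' W j x * pderiv' (fun y => v y j) i x) := by
    intro i
    have hdd : divW W v = fun y =>
        (∑ j, pderiv' (fun z => v z j) j y) - ∑ j, pderiv' W j y * v y j := rfl
    rw [hdd, pderiv'_sub i
      ((ContDiff.sum (fun j _ => hdvk j j)).differentiable (by simp)).differentiableAt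
      ((ContDiff.sum (fun j _ => (hdW j).mul (hvk j))).differentiable (by simp)).differentiableAt,
      pderiv'_fsum _ (fun j y => pderiv' (fun z => v z j) j y) i x
        (fun j _ => ((hdvk j j).differentiable (by simp)).differentiableAt),
      pderiv'_fsum _ (fun j y => pderiv' W j y * v y j) i x
        (fun j _ => (((hdW j).differentiable (by simp)).differentiableAt).mul
          (((hvk j).differentiable (by simp)).differentiableAt))]
    congr 1
    exact Finset.sum_congr rfl fun j _ =>
      pderiv'_mul i (((hdW j).differentiable (by simp)).differentiableAt)
        (((hvk j).differentiable (by simp)).differentiableAt)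
  have hC : ∀ k i j, pderiv' (fun y => pderiv' (fun z => v z k) i y) j x
      = pderiv' (fun y => pderiv' (fun z => v z k) j y) i x :=
    fun k i j => pderiv'_comm (hvk k) i j x
  have E1 : ∑ i, pderiv' (fun y => ∑ j, v y j * pderiv' (fun z => v z i) j y) i x
      = ∑ i, ∑ j, (pderiv' (fun y => v y j) i x * pderiv' (fun z => v z i) j x
          + v x j * pderiv' (fun y => pderiv' (fun z => v z i) j y) i x) :=
    Finset.sum_congr rfl fun i _ => e1 i
  have E2 : ∑ i, pderiv' (divW W v) i x * v x i
      = ∑ i, ((∑ j, pderiv' (fun y => pderiv' (fun z => v z j) j y) i x)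
          - ∑ j, (pderiv' (fun y => pderiv' W j y) i x * v x j
              + pderiv' W j x * pderiv' (fun y => v y j) i x)) * v x i :=
    Finset.sum_congr rfl fun i _ => by rw [e2 i]
  simp only [divW]
  rw [E1, E2]
  exact alg_id (fun i j => pderiv' (fun y => v y i) j x)
    (fun k i j => pderiv' (fun y => pderiv' (fun z => v z k) i y) j x)
    (fun i j => pderiv' (fun y => pderiv' W i y) j x)
    (fun i => pderiv' W i x) (fun i => v x i) hC
end

section
/- Let ν be a probability measure on ℝⁿ, Y ~ ν, and suppose that for random vectors X₀ ~ ν_{K₀}, X₁ ~ ν_{K₁} (normalized restrictions of ν to compact sets K₀, K₁) there is a coupling (X₀,X₁) with exp(−D((1−t)X₀+tX₁‖Y)/n) ≥ (1−t)exp(−D(X₀‖Y)/n) + t·exp(−D(X₁‖Y)/n). Then ν((1−t)K₀+tK₁)^{1/n} ≥ (1−t)ν(K₀)^{1/n} + t·ν(K₁)^{1/n}. -/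
/-!
Write `ν_K = ν[|K]`. Its log-likelihood ratio against `ν` is the constant `-log ν(K)`, so
`e^{-D(ν_K‖ν)/n} = ν(K)^{1/n}`. Conversely, if `μ` is concentrated on `S`, then
`e^{-D(μ‖ν)} ≤ ∫ e^{-llr} dμ = ∫_S (dν/dμ) dμ ≤ ν(S)` by Jensen's inequality, so
`e^{-D(μ‖ν)/n} ≤ ν(S)^{1/n}`. The law of `(1-t)X₀ + tX₁` is concentrated on
`(1-t)K₀ + tK₁`, and the hypothesis is squeezed between these two evaluations.
-/

open MeasureTheory Pointwise Classical

/-- Relative entropy `D(μ‖ν)`, valued in `EReal`, set to `+∞` when `μ` is not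
absolutely continuous with respect to `ν` or the log-likelihood ratio is not integrable. -/
noncomputable def relEnt {α : Type*} [MeasurableSpace α] (μ ν : Measure α) : EReal :=
  if μ ≪ ν ∧ Integrable (llr μ ν) μ then ((∫ x, llr μ ν x ∂μ : ℝ) : EReal) else ⊤

/-- `e^{-D/n}`, with the convention `e^{-∞} = 0`. -/
noncomputable def expNegDiv (D : EReal) (n : ℝ) : ℝ :=
  if D = ⊤ then 0 else Real.exp (-D.toReal / n)

open ProbabilityTheory

section RelativeEntropy

variable {α : Type*} [MeasurableSpace α]

lemma relEnt_of_ac_of_integrable {μ ν : Measure α} (hμν : μ ≪ ν)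
    (hint : Integrable (llr μ ν) μ) : relEnt μ ν = ((∫ x, llr μ ν x ∂μ : ℝ) : EReal) :=
  if_pos ⟨hμν, hint⟩

lemma llr_cond_ae_eq (ν : Measure α) [IsFiniteMeasure ν] {K : Set α} (hK : MeasurableSet K)
    (hνK : ν K ≠ 0) : llr ν[|K] ν =ᵐ[ν[|K]] fun _ ↦ -Real.log (ν.real K) := by
  have hrestrict : llr (ν.restrict K) ν =ᵐ[ν.restrict K] 0 := by
    filter_upwards [ae_restrict_of_ae (Measure.rnDeriv_restrict_self ν hK),
      ae_restrict_mem hK] with x hx hxK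
    simp [llr, hx, hxK]
  refine Measure.ae_smul_measure ?_ _
  filter_upwards [llr_smul_left Measure.restrict_le_self.absolutelyContinuous (ν K)⁻¹
    (by simp [measure_ne_top]) (by simpa), hrestrict] with x hx hx0
  simp [ProbabilityTheory.cond, hx, hx0, measureReal_def]

lemma relEnt_cond (ν : Measure α) [IsFiniteMeasure ν] {K : Set α} (hK : MeasurableSet K)
    (hνK : ν K ≠ 0) : relEnt ν[|K] ν = ((-Real.log (ν.real K) : ℝ) : EReal) := by
  have := cond_isProbabilityMeasure (μ := ν) hνK
  have hllr := llr_cond_ae_eq ν hK hνK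
  rw [relEnt_of_ac_of_integrable cond_absolutelyContinuous
    ((integrable_const _).congr hllr.symm), integral_congr_ae hllr]
  simp

lemma exp_neg_integral_llr_le {μ ν : Measure α} [IsProbabilityMeasure μ] [IsFiniteMeasure ν]
    (hμν : μ ≪ ν) (hint : Integrable (llr μ ν) μ) {S : Set α} (hS : ∀ᵐ x ∂μ, x ∈ S) :
    Real.exp (-∫ x, llr μ ν x ∂μ) ≤ ν.real S := by
  have hexp : (fun x ↦ Real.exp (-llr μ ν x)) =ᵐ[μ] fun x ↦ (ν.rnDeriv μ x).toReal :=
    exp_neg_llr hμν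
  calc Real.exp (-∫ x, llr μ ν x ∂μ) = Real.exp (∫ x, -llr μ ν x ∂μ) := by rw [integral_neg]
    _ ≤ ∫ x, Real.exp (-llr μ ν x) ∂μ :=
      convexOn_exp.map_integral_le Real.continuous_exp.continuousOn isClosed_univ (by simp)
        hint.neg (Measure.integrable_toReal_rnDeriv.congr hexp.symm)
    _ = ∫ x in S, (ν.rnDeriv μ x).toReal ∂μ := by
      rw [integral_congr_ae hexp, Measure.restrict_eq_self_of_ae_mem hS]
    _ ≤ ν.real S := Measure.setIntegral_toReal_rnDeriv_le (measure_ne_top ν S)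

lemma expNegDiv_relEnt_le {μ ν : Measure α} [IsProbabilityMeasure μ] [IsFiniteMeasure ν]
    {S : Set α} (hS : ∀ᵐ x ∂μ, x ∈ S) {m : ℝ} (hm : 0 ≤ m) :
    expNegDiv (relEnt μ ν) m ≤ ν.real S ^ (1 / m) := by
  by_cases h : μ ≪ ν ∧ Integrable (llr μ ν) μ
  · rw [relEnt_of_ac_of_integrable h.1 h.2, expNegDiv, if_neg (EReal.coe_ne_top _),
      EReal.toReal_coe, div_eq_mul_one_div, Real.exp_mul]
    exact Real.rpow_le_rpow (Real.exp_nonneg _) (exp_neg_integral_llr_le h.1 h.2 hS)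
      (by positivity)
  · rw [relEnt, if_neg h, expNegDiv, if_pos rfl]
    positivity

lemma expNegDiv_relEnt_cond (ν : Measure α) [IsFiniteMeasure ν] {K : Set α}
    (hK : MeasurableSet K) (hνK : ν K ≠ 0) (m : ℝ) :
    expNegDiv (relEnt ν[|K] ν) m = ν.real K ^ (1 / m) := by
  have hpos : 0 < ν.real K := ENNReal.toReal_pos hνK (measure_ne_top ν K)
  rw [relEnt_cond ν hK hνK, expNegDiv, if_neg (EReal.coe_ne_top _), EReal.toReal_coe, neg_neg,
    Real.rpow_def_of_pos hpos, mul_one_div]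

end RelativeEntropy

lemma ae_smul_add_smul_mem {𝕜 E : Type*} [MeasurableSpace E] [SMul 𝕜 E] [Add E]
    {π : Measure (E × E)} {A B : Set E} (hA : ∀ᵐ x ∂π.map Prod.fst, x ∈ A)
    (hB : ∀ᵐ x ∂π.map Prod.snd, x ∈ B) (a b : 𝕜) :
    ∀ᵐ p ∂π, a • p.1 + b • p.2 ∈ a • A + b • B := by
  filter_upwards [ae_of_ae_map measurable_fst.aemeasurable hA,
    ae_of_ae_map measurable_snd.aemeasurable hB] with p h₁ h₂
  exact Set.add_mem_add (Set.smul_mem_smul_set h₁) (Set.smul_mem_smul_set h₂)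

theorem stmt_15_general {n : ℕ}
    (ν : Measure (EuclideanSpace ℝ (Fin n))) [IsProbabilityMeasure ν]
    (K₀ K₁ : Set (EuclideanSpace ℝ (Fin n)))
    (hK₀ : IsCompact K₀) (hK₁ : IsCompact K₁)
    (hν₀ : 0 < ν K₀) (hν₁ : 0 < ν K₁)
    (t : ℝ)
    (νK₀ νK₁ : Measure (EuclideanSpace ℝ (Fin n)))
    (hνK₀ : νK₀ = (ν K₀)⁻¹ • ν.restrict K₀) (hνK₁ : νK₁ = (ν K₁)⁻¹ • ν.restrict K₁)
    (hcoupling : ∃ π : Measure (EuclideanSpace ℝ (Fin n) × EuclideanSpace ℝ (Fin n)),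
      IsProbabilityMeasure π ∧ π.map Prod.fst = νK₀ ∧ π.map Prod.snd = νK₁ ∧
        expNegDiv (relEnt (π.map fun p => (1 - t) • p.1 + t • p.2) ν) n ≥
          (1 - t) * expNegDiv (relEnt νK₀ ν) n + t * expNegDiv (relEnt νK₁ ν) n) :
    (ν ((1 - t) • K₀ + t • K₁)).toReal ^ ((1 : ℝ) / n) ≥
      (1 - t) * (ν K₀).toReal ^ ((1 : ℝ) / n) + t * (ν K₁).toReal ^ ((1 : ℝ) / n) := by
  obtain ⟨π, hπ, hfst, hsnd, hineq⟩ := hcoupling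
  have hK₀m := hK₀.isClosed.measurableSet
  have hK₁m := hK₁.isClosed.measurableSet
  have hcond₀ : νK₀ = ν[|K₀] := hνK₀
  have hcond₁ : νK₁ = ν[|K₁] := hνK₁
  have hf : Measurable fun p : EuclideanSpace ℝ (Fin n) × EuclideanSpace ℝ (Fin n) ↦
      (1 - t) • p.1 + t • p.2 := by fun_prop
  have := Measure.isProbabilityMeasure_map (μ := π) hf.aemeasurable
  have hS : MeasurableSet ((1 - t) • K₀ + t • K₁) :=
    ((hK₀.smul _).add (hK₁.smul _)).isClosed.measurableSet
  have hsupp := (ae_map_iff hf.aemeasurable hS).2 <| ae_smul_add_smul_mem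
    (hfst ▸ hcond₀ ▸ ae_cond_mem hK₀m) (hsnd ▸ hcond₁ ▸ ae_cond_mem hK₁m) (1 - t) t
  rw [hcond₀, hcond₁, expNegDiv_relEnt_cond ν hK₀m hν₀.ne', expNegDiv_relEnt_cond ν hK₁m hν₁.ne']
    at hineq
  exact hineq.trans (expNegDiv_relEnt_le hsupp n.cast_nonneg)

theorem stmt_15 {n : ℕ} (hn : 0 < n)
    (ν : Measure (EuclideanSpace ℝ (Fin n))) [IsProbabilityMeasure ν]
    (K₀ K₁ : Set (EuclideanSpace ℝ (Fin n)))
    (hK₀ : IsCompact K₀) (hK₁ : IsCompact K₁)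
    (hν₀ : 0 < ν K₀) (hν₁ : 0 < ν K₁)
    (t : ℝ) (ht : t ∈ Set.Icc (0 : ℝ) 1)
    (νK₀ νK₁ : Measure (EuclideanSpace ℝ (Fin n)))
    (hνK₀ : νK₀ = (ν K₀)⁻¹ • ν.restrict K₀) (hνK₁ : νK₁ = (ν K₁)⁻¹ • ν.restrict K₁)
    (hcoupling : ∃ π : Measure (EuclideanSpace ℝ (Fin n) × EuclideanSpace ℝ (Fin n)),
      IsProbabilityMeasure π ∧ π.map Prod.fst = νK₀ ∧ π.map Prod.snd = νK₁ ∧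
        expNegDiv (relEnt (π.map fun p => (1 - t) • p.1 + t • p.2) ν) n ≥
          (1 - t) * expNegDiv (relEnt νK₀ ν) n + t * expNegDiv (relEnt νK₁ ν) n) :
    (ν ((1 - t) • K₀ + t • K₁)).toReal ^ ((1 : ℝ) / n) ≥
      (1 - t) * (ν K₀).toReal ^ ((1 : ℝ) / n) + t * (ν K₁).toReal ^ ((1 : ℝ) / n) :=
  stmt_15_general ν K₀ K₁ hK₀ hK₁ hν₀ hν₁ t νK₀ νK₁ hνK₀ hνK₁ hcoupling
end
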